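/- Fix a dictionary D ∈ ℝ^{d×n} of full row rank, a matrix A ∈ ℝ^{m×d} satisfying the D-null space property of order s, and an index set T with |T| ≤ s. Define h(w) = sup_{ũ ∈ ker D} ( ‖w_{T^c}‖₁ − ‖w_T + ũ‖₁ ) / ‖D w‖₂. Let C₁ > 0 be a constant such that the set W = { w ∈ ℝ^n : D w ∈ ker A \ {0} and ‖w‖₂ ≤ C₁‖D w‖₂ } is nonempty. Then there exists a constant C₂ > 0 such that h(w) ≥ C₂ for all w ∈ W. -/

import Mathlib

open scoped BigOperators

section Defs

variable {𝕜 : Type*}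

/-- ℓ¹ norm of a finitely-indexed vector. -/
noncomputable def norm1 [RCLike 𝕜] {ι : Type*} [Fintype ι] (x : ι → 𝕜) : ℝ :=
  ∑ i, ‖x i‖

/-- ℓ² norm of a finitely-indexed vector. -/
noncomputable def norm2 [RCLike 𝕜] {ι : Type*} [Fintype ι] (x : ι → 𝕜) : ℝ :=
  Real.sqrt (∑ i, ‖x i‖ ^ 2)

/-- Restriction of a vector to an index set `T` (zero outside `T`). -/
def restr [Zero 𝕜] {ι : Type*} [DecidableEq ι] (T : Finset ι) (x : ι → 𝕜) : ι → 𝕜 :=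
  fun i => if i ∈ T then x i else 0

/-- `x` has at most `s` nonzero entries. -/
def sparse [Zero 𝕜] {ι : Type*} (s : ℕ) (x : ι → 𝕜) : Prop :=
  {i | x i ≠ 0}.ncard ≤ s

/-- Null space property of order `s`. -/
def NSP [RCLike 𝕜] {m : ℕ} {ι : Type*} [Fintype ι] [DecidableEq ι]
    (M : Matrix (Fin m) ι 𝕜) (s : ℕ) : Prop :=
  ∀ v : ι → 𝕜, M.mulVec v = 0 → v ≠ 0 →
    ∀ T : Finset ι, T.card ≤ s → norm1 (restr T v) < norm1 (restr Tᶜ v)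

/-- `D`-null space property of order `s`. -/
def DNSP [RCLike 𝕜] {m d : ℕ} {ι : Type*} [Fintype ι] [DecidableEq ι]
    (A : Matrix (Fin m) (Fin d) 𝕜) (D : Matrix (Fin d) ι 𝕜) (s : ℕ) : Prop :=
  ∀ T : Finset ι, T.card ≤ s →
    ∀ v : ι → 𝕜, A.mulVec (D.mulVec v) = 0 → D.mulVec v ≠ 0 →
      ∃ u : ι → 𝕜, D.mulVec u = 0 ∧ norm1 (restr T v + u) < norm1 (restr Tᶜ v)

/-- Strong `D`-null space property of order `s` with constant `c`. -/
def SNSPc [RCLike 𝕜] {m d : ℕ} {ι : Type*} [Fintype ι] [DecidableEq ι]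
    (A : Matrix (Fin m) (Fin d) 𝕜) (D : Matrix (Fin d) ι 𝕜) (s : ℕ) (c : ℝ) : Prop :=
  ∀ v : ι → 𝕜, A.mulVec (D.mulVec v) = 0 →
    ∀ T : Finset ι, T.card ≤ s →
      ∃ u : ι → 𝕜, D.mulVec u = 0 ∧
        c * norm2 (D.mulVec v) ≤ norm1 (restr Tᶜ v) - norm1 (restr T v + u)

/-- Smallest positive singular value of a matrix: the infimum of the set of positive `σ`
such that `σ²` is an eigenvalue of `Mᴴ M`. -/
noncomputable def nuSV [RCLike 𝕜] {κ ι : Type*} [Fintype κ] [Fintype ι]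
    (M : Matrix κ ι 𝕜) : ℝ :=
  sInf {σ : ℝ | 0 < σ ∧ ∃ v : ι → 𝕜, v ≠ 0 ∧ (M.conjTranspose * M).mulVec v = ((σ : 𝕜) ^ 2) • v}

/-- ℓ¹ error of the best `s`-term approximation. -/
noncomputable def sigmaS [RCLike 𝕜] {ι : Type*} [Fintype ι] (s : ℕ) (x : ι → 𝕜) : ℝ :=
  sInf {r : ℝ | ∃ v : ι → 𝕜, sparse s v ∧ r = norm1 (x - v)}

/-- Spectral norm (ℓ² → ℓ² operator norm). -/
noncomputable def specNorm [RCLike 𝕜] {m d : ℕ} (A : Matrix (Fin m) (Fin d) 𝕜) : ℝ :=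
  sSup {r : ℝ | ∃ x : Fin d → 𝕜, norm2 x ≤ 1 ∧ r = norm2 (A.mulVec x)}

/-- ℓ¹ → ℓ² operator norm: the maximal ℓ² norm of a column. -/
noncomputable def norm12 [RCLike 𝕜] {d : ℕ} {ι : Type*} [Fintype ι]
    (M : Matrix (Fin d) ι 𝕜) : ℝ :=
  sSup {r : ℝ | ∃ j : ι, r = norm2 (fun i => M i j)}

end Defs

/-!
The margin `h` is invariant under positive rescaling of `w`, so it suffices to bound it on the
slice `{w ∈ W : ‖D w‖₂ = 1}`, which is compact. As a supremum of functions that are continuous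
wherever `D w ≠ 0`, `h` is lower semicontinuous there, hence attains its minimum on the slice, and
that minimum is positive by the `D`-null space property.
-/

open Matrix Set

section Norms

variable {𝕜 ι : Type*} [RCLike 𝕜] [Fintype ι]

lemma norm1_eq_norm_toLp (x : ι → 𝕜) : norm1 x = ‖WithLp.toLp 1 x‖ :=
  (PiLp.norm_eq_of_L1 _).symm

lemma norm2_eq_norm_toLp (x : ι → 𝕜) : norm2 x = ‖WithLp.toLp 2 x‖ :=
  (PiLp.norm_eq_of_L2 _).symm

lemma norm1_nonneg (x : ι → 𝕜) : 0 ≤ norm1 x :=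
  Finset.sum_nonneg fun i _ => norm_nonneg (x i)

lemma norm2_nonneg (x : ι → 𝕜) : 0 ≤ norm2 x :=
  Real.sqrt_nonneg _

lemma norm2_pos {x : ι → 𝕜} (hx : x ≠ 0) : 0 < norm2 x := by
  rw [norm2_eq_norm_toLp, norm_pos_iff]
  exact fun h => hx (congrArg WithLp.ofLp h)

lemma norm1_smul (c : 𝕜) (x : ι → 𝕜) : norm1 (c • x) = ‖c‖ * norm1 x := by
  rw [norm1_eq_norm_toLp, norm1_eq_norm_toLp, WithLp.toLp_smul, norm_smul]

lemma norm2_smul (c : 𝕜) (x : ι → 𝕜) : norm2 (c • x) = ‖c‖ * norm2 x := by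
  rw [norm2_eq_norm_toLp, norm2_eq_norm_toLp, WithLp.toLp_smul, norm_smul]

lemma continuous_norm1 : Continuous (norm1 : (ι → 𝕜) → ℝ) := by
  simp_rw [funext norm1_eq_norm_toLp]
  exact continuous_norm.comp (PiLp.continuous_toLp 1 _)

lemma continuous_norm2 : Continuous (norm2 : (ι → 𝕜) → ℝ) := by
  simp_rw [funext norm2_eq_norm_toLp]
  exact continuous_norm.comp (PiLp.continuous_toLp 2 _)

lemma isCompact_norm2_le (C : ℝ) : IsCompact {x : ι → 𝕜 | norm2 x ≤ C} := by
  convert (isCompact_closedBall (0 : EuclideanSpace 𝕜 ι) C).image (PiLp.continuous_ofLp 2 _)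
  ext x
  constructor
  · exact fun hx => ⟨WithLp.toLp 2 x, by simpa [norm2_eq_norm_toLp] using hx, rfl⟩
  · rintro ⟨y, hy, rfl⟩
    simpa [norm2_eq_norm_toLp] using hy

end Norms

section Restr

variable {ι : Type*} [DecidableEq ι]

lemma restr_smul {R M : Type*} [Zero M] [SMulZeroClass R M] (T : Finset ι) (c : R) (x : ι → M) :
    restr T (c • x) = c • restr T x := by
  ext i
  by_cases hi : i ∈ T <;> simp [restr, hi]

lemma continuous_restr {M : Type*} [Zero M] [TopologicalSpace M] (T : Finset ι) :
    Continuous (restr T : (ι → M) → ι → M) :=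
  continuous_pi fun i => by
    by_cases hi : i ∈ T
    · simpa [restr, hi] using continuous_apply i
    · simpa [restr, hi] using continuous_const

end Restr

section Margin

variable {ι : Type*} [Fintype ι] [DecidableEq ι] {d : ℕ}

noncomputable def dnspGap (T : Finset ι) (w u : ι → ℝ) : ℝ :=
  norm1 (restr Tᶜ w) - norm1 (restr T w + u)

/-- The function `h` of the paper. -/
noncomputable def dnspMargin (D : Matrix (Fin d) ι ℝ) (T : Finset ι) (w : ι → ℝ) : ℝ :=
  sSup {r : ℝ | ∃ u : ι → ℝ, D *ᵥ u = 0 ∧ r = dnspGap T w u / norm2 (D *ᵥ w)}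

lemma dnspMargin_eq_iSup (D : Matrix (Fin d) ι ℝ) (T : Finset ι) (w : ι → ℝ) :
    dnspMargin D T w = ⨆ u : {u : ι → ℝ // D *ᵥ u = 0}, dnspGap T w u / norm2 (D *ᵥ w) := by
  rw [dnspMargin, iSup]
  congr 1
  ext r
  simp [eq_comm]

lemma dnspGap_smul (T : Finset ι) {t : ℝ} (ht : 0 ≤ t) (w u : ι → ℝ) :
    dnspGap T (t • w) (t • u) = t * dnspGap T w u := by
  simp only [dnspGap, restr_smul, ← smul_add, norm1_smul, Real.norm_of_nonneg ht]
  ring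

lemma dnspMargin_smul (D : Matrix (Fin d) ι ℝ) (T : Finset ι) {t : ℝ} (ht : 0 < t) (w : ι → ℝ) :
    dnspMargin D T (t • w) = dnspMargin D T w := by
  have hratio : ∀ u, dnspGap T (t • w) (t • u) / norm2 (D *ᵥ (t • w)) =
      dnspGap T w u / norm2 (D *ᵥ w) := fun u => by
    rw [dnspGap_smul T ht.le, mulVec_smul, norm2_smul, Real.norm_of_nonneg ht.le,
      mul_div_mul_left _ _ ht.ne']
  unfold dnspMargin
  congr 1
  ext r
  constructor
  · rintro ⟨u, hu, rfl⟩
    refine ⟨t⁻¹ • u, by rw [mulVec_smul, hu, smul_zero], ?_⟩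
    rw [← hratio, smul_inv_smul₀ ht.ne']
  · rintro ⟨u, hu, rfl⟩
    exact ⟨t • u, by rw [mulVec_smul, hu, smul_zero], (hratio u).symm⟩

lemma bddAbove_range_dnspGap_div (D : Matrix (Fin d) ι ℝ) (T : Finset ι) (w : ι → ℝ) :
    BddAbove (range fun u : {u : ι → ℝ // D *ᵥ u = 0} => dnspGap T w u / norm2 (D *ᵥ w)) := by
  refine ⟨norm1 (restr Tᶜ w) / norm2 (D *ᵥ w), ?_⟩
  rintro _ ⟨u, rfl⟩
  exact div_le_div_of_nonneg_right (sub_le_self _ (norm1_nonneg _)) (norm2_nonneg _)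

lemma lowerSemicontinuousOn_dnspMargin (D : Matrix (Fin d) ι ℝ) (T : Finset ι) :
    LowerSemicontinuousOn (dnspMargin D T) {w | D *ᵥ w ≠ 0} := by
  simp_rw [funext (dnspMargin_eq_iSup D T)]
  refine lowerSemicontinuousOn_ciSup (fun w _ => bddAbove_range_dnspGap_div D T w) fun u => ?_
  have hD : Continuous (D *ᵥ · : (ι → ℝ) → Fin d → ℝ) :=
    continuous_const.matrix_mulVec continuous_id
  refine ContinuousOn.lowerSemicontinuousOn ?_
  refine ContinuousOn.div (Continuous.continuousOn ?_) (continuous_norm2.comp hD).continuousOn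
    fun w hw => (norm2_pos hw).ne'
  exact (continuous_norm1.comp (continuous_restr _)).sub
    (continuous_norm1.comp ((continuous_restr _).add continuous_const))

lemma DNSP.dnspMargin_pos {m s : ℕ} {A : Matrix (Fin m) (Fin d) ℝ} {D : Matrix (Fin d) ι ℝ}
    (hA : DNSP A D s) {T : Finset ι} (hT : T.card ≤ s) {w : ι → ℝ}
    (hw : A *ᵥ (D *ᵥ w) = 0) (hDw : D *ᵥ w ≠ 0) : 0 < dnspMargin D T w := by
  obtain ⟨u, hu, hlt⟩ := hA T hT w hw hDw
  rw [dnspMargin_eq_iSup]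
  exact (div_pos (sub_pos.2 hlt) (norm2_pos hDw)).trans_le
    (le_ciSup (bddAbove_range_dnspGap_div D T w) ⟨u, hu⟩)

end Margin

section Slice

variable {ι : Type*} [Fintype ι] {m d : ℕ}

def normalizedW (A : Matrix (Fin m) (Fin d) ℝ) (D : Matrix (Fin d) ι ℝ) (C : ℝ) : Set (ι → ℝ) :=
  {w | A *ᵥ (D *ᵥ w) = 0 ∧ norm2 (D *ᵥ w) = 1 ∧ norm2 w ≤ C}

lemma isCompact_normalizedW (A : Matrix (Fin m) (Fin d) ℝ) (D : Matrix (Fin d) ι ℝ) (C : ℝ) :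
    IsCompact (normalizedW A D C) := by
  refine (isCompact_norm2_le C).of_isClosed_subset ?_ fun w hw => hw.2.2
  have hD : Continuous (D *ᵥ · : (ι → ℝ) → Fin d → ℝ) :=
    continuous_const.matrix_mulVec continuous_id
  exact (isClosed_eq (continuous_const.matrix_mulVec hD) continuous_const).inter
    ((isClosed_eq (continuous_norm2.comp hD) continuous_const).inter
      (isClosed_le continuous_norm2 continuous_const))

lemma mulVec_ne_zero_of_mem_normalizedW {A : Matrix (Fin m) (Fin d) ℝ} {D : Matrix (Fin d) ι ℝ}
    {C : ℝ} {w : ι → ℝ} (hw : w ∈ normalizedW A D C) : D *ᵥ w ≠ 0 := fun h => by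
  simpa [h, norm2] using hw.2.1

lemma inv_norm2_smul_mem_normalizedW {A : Matrix (Fin m) (Fin d) ℝ} {D : Matrix (Fin d) ι ℝ}
    {C : ℝ} {w : ι → ℝ} (hA : A *ᵥ (D *ᵥ w) = 0) (hD : D *ᵥ w ≠ 0)
    (hC : norm2 w ≤ C * norm2 (D *ᵥ w)) :
    (norm2 (D *ᵥ w))⁻¹ • w ∈ normalizedW A D C := by
  have hpos := norm2_pos hD
  refine ⟨by rw [mulVec_smul, mulVec_smul, hA, smul_zero], ?_, ?_⟩
  · rw [mulVec_smul, norm2_smul, Real.norm_of_nonneg (inv_nonneg.2 hpos.le),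
      inv_mul_cancel₀ hpos.ne']
  · rw [norm2_smul, Real.norm_of_nonneg (inv_nonneg.2 hpos.le), inv_mul_le_iff₀ hpos, mul_comm]
    exact hC

end Slice

theorem stmt18_general {m d n s : ℕ}
    (A : Matrix (Fin m) (Fin d) ℝ) (D : Matrix (Fin d) (Fin n) ℝ)
    (hDNSP : DNSP A D s)
    (T : Finset (Fin n)) (hT : T.card ≤ s)
    (C₁ : ℝ)
    (hW : ∃ w : Fin n → ℝ, A.mulVec (D.mulVec w) = 0 ∧ D.mulVec w ≠ 0 ∧
      norm2 w ≤ C₁ * norm2 (D.mulVec w)) :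
    ∃ C₂ : ℝ, 0 < C₂ ∧ ∀ w : Fin n → ℝ,
      A.mulVec (D.mulVec w) = 0 → D.mulVec w ≠ 0 → norm2 w ≤ C₁ * norm2 (D.mulVec w) →
      C₂ ≤ sSup {r : ℝ | ∃ ut : Fin n → ℝ, D.mulVec ut = 0 ∧
        r = (norm1 (restr Tᶜ w) - norm1 (restr T w + ut)) / norm2 (D.mulVec w)} := by
  obtain ⟨w₀, hw₀⟩ := hW
  have hK : (normalizedW A D C₁).Nonempty :=
    ⟨_, inv_norm2_smul_mem_normalizedW hw₀.1 hw₀.2.1 hw₀.2.2⟩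
  obtain ⟨w', hw', hmin⟩ := ((lowerSemicontinuousOn_dnspMargin D T).mono
    fun _ => mulVec_ne_zero_of_mem_normalizedW).exists_isMinOn hK (isCompact_normalizedW A D C₁)
  refine ⟨dnspMargin D T w', hDNSP.dnspMargin_pos hT hw'.1 (mulVec_ne_zero_of_mem_normalizedW hw'),
    fun w hA hD hC => ?_⟩
  calc dnspMargin D T w'
      ≤ dnspMargin D T ((norm2 (D *ᵥ w))⁻¹ • w) := hmin (inv_norm2_smul_mem_normalizedW hA hD hC)
    _ = dnspMargin D T w := dnspMargin_smul D T (inv_pos.2 (norm2_pos hD)) w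

/-- under `D`-NSP, the function `h` is bounded below by a positive constant
on the set `W`. -/
theorem stmt18 {m d n s : ℕ}
    (A : Matrix (Fin m) (Fin d) ℝ) (D : Matrix (Fin d) (Fin n) ℝ)
    (hD : Function.Surjective D.mulVec)
    (hDNSP : DNSP A D s)
    (T : Finset (Fin n)) (hT : T.card ≤ s)
    (C₁ : ℝ) (hC₁ : 0 < C₁)
    (hW : ∃ w : Fin n → ℝ, A.mulVec (D.mulVec w) = 0 ∧ D.mulVec w ≠ 0 ∧
      norm2 w ≤ C₁ * norm2 (D.mulVec w)) :
    ∃ C₂ : ℝ, 0 < C₂ ∧ ∀ w : Fin n → ℝ,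
      A.mulVec (D.mulVec w) = 0 → D.mulVec w ≠ 0 → norm2 w ≤ C₁ * norm2 (D.mulVec w) →
      C₂ ≤ sSup {r : ℝ | ∃ ut : Fin n → ℝ, D.mulVec ut = 0 ∧
        r = (norm1 (restr Tᶜ w) - norm1 (restr T w + ut)) / norm2 (D.mulVec w)} :=
  stmt18_general A D hDNSP T hT C₁ hW
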